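/- arXiv:2406.13447 — 6 statements merged into one kernel-verified Lean document; each statement's English description precedes it below -/
import Mathlib

section
/- For all δ ∈ (0,1] and all ξ ∈ (0,δ), one has M_−(δ) ≤ M(δ) ≤ M_−(δ−ξ). Moreover, the set {δ ∈ (0,1] : M(δ) ≠ M_−(δ)} is countable, i.e. M(δ) = M_−(δ) at all but countably many δ ∈ (0,1]. -/
open MeasureTheory ENNReal

/-- The minimax `(1-δ)`th quantile. -/
noncomputable def minimaxQuantile {Θ 𝒳 : Type*} [MeasurableSpace Θ] [MeasurableSpace 𝒳]
    (Pfam : Θ → Set (Measure 𝒳)) (L : Θ → Θ → ℝ) (δ : ℝ) : ℝ≥0∞ :=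
  ⨅ T : {f : 𝒳 → Θ // Measurable f}, ⨆ θ : Θ, ⨆ P ∈ Pfam θ,
    sInf {r : ℝ≥0∞ | ENNReal.ofReal (1 - δ) ≤ P {x | ENNReal.ofReal (L (T.1 x) θ) ≤ r}}

/-- The lower minimax `(1-δ)`th quantile. -/
noncomputable def lowerMinimaxQuantile {Θ 𝒳 : Type*} [MeasurableSpace Θ] [MeasurableSpace 𝒳]
    (Pfam : Θ → Set (Measure 𝒳)) (L : Θ → Θ → ℝ) (δ : ℝ) : ℝ≥0∞ :=
  sInf {r : ℝ≥0∞ |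
    (⨅ T : {f : 𝒳 → Θ // Measurable f}, ⨆ θ : Θ, ⨆ P ∈ Pfam θ,
      P {x | r < ENNReal.ofReal (L (T.1 x) θ)}) ≤ ENNReal.ofReal δ}

section Aux

variable {Θ 𝒳 : Type*} [PseudoMetricSpace Θ] [Nonempty Θ] [MeasurableSpace Θ] [BorelSpace Θ]
    [MeasurableSpace 𝒳]

lemma aux_meas (g : ℝ → ℝ) (hg : MonotoneOn g (Set.Ici 0))
    (f : 𝒳 → Θ) (hf : Measurable f) (θ : Θ) (r : ℝ≥0∞) :
    MeasurableSet {x | ENNReal.ofReal (g (dist (f x) θ)) ≤ r} := by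
  have hmono : Monotone (fun t : ℝ => ENNReal.ofReal (g (max t 0))) := by
    intro a b hab
    exact ENNReal.ofReal_le_ofReal (hg (le_max_right a 0) (le_max_right b 0)
      (max_le_max hab le_rfl))
  have hF : Measurable (fun x : 𝒳 => ENNReal.ofReal (g (dist (f x) θ))) := by
    have : (fun x : 𝒳 => ENNReal.ofReal (g (dist (f x) θ)))
        = (fun t : ℝ => ENNReal.ofReal (g (max t 0))) ∘ (fun x => dist (f x) θ) := by
      funext x
      simp [max_eq_left dist_nonneg]
    rw [this]
    exact hmono.measurable.comp ((continuous_id.dist continuous_const).measurable.comp hf)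
  exact measurableSet_le hF measurable_const

lemma aux_A (Pfam : Θ → Set (Measure 𝒳)) (hPfam : ∀ θ, ∀ P ∈ Pfam θ, IsProbabilityMeasure P)
    (g : ℝ → ℝ) (hg : MonotoneOn g (Set.Ici 0)) {δ : ℝ} (hδ1 : δ ≤ 1) :
    lowerMinimaxQuantile Pfam (fun θ₁ θ₂ => g (dist θ₁ θ₂)) δ ≤
      minimaxQuantile Pfam (fun θ₁ θ₂ => g (dist θ₁ θ₂)) δ := by
  rw [lowerMinimaxQuantile]
  set M := minimaxQuantile Pfam (fun θ₁ θ₂ => g (dist θ₁ θ₂)) δ with hM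
  rcases eq_or_ne M ⊤ with h | h
  · rw [h]; exact le_top
  refine ENNReal.le_of_forall_pos_le_add fun ε hε hMtop => ?_
  refine sInf_le ?_
  have hlt : M < M + ε := ENNReal.lt_add_right h (by exact_mod_cast hε.ne')
  rw [hM, minimaxQuantile] at hlt
  obtain ⟨T, hT⟩ := iInf_lt_iff.mp hlt
  simp only [Set.mem_setOf_eq]
  refine le_trans (iInf_le _ T) ?_
  refine iSup_le fun θ => iSup_le fun P => iSup_le fun hP => ?_
  haveI := hPfam θ P hP
  have h2 := lt_of_le_of_lt (le_iSup _ θ) hT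
  have hθP : sInf {r : ℝ≥0∞ | ENNReal.ofReal (1 - δ)
      ≤ P {x | ENNReal.ofReal (g (dist (T.1 x) θ)) ≤ r}} < M + ε :=
    lt_of_le_of_lt (le_biSup (fun P' : Measure 𝒳 => sInf {r : ℝ≥0∞ | ENNReal.ofReal (1 - δ)
      ≤ P' {x | ENNReal.ofReal (g (dist (T.1 x) θ)) ≤ r}}) hP) h2
  obtain ⟨r, hr, hrlt⟩ := sInf_lt_iff.mp hθP
  have hsub : {x | M + ε < ENNReal.ofReal (g (dist (T.1 x) θ))}
      ⊆ {x | ENNReal.ofReal (g (dist (T.1 x) θ)) ≤ r}ᶜ := by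
    intro x hx
    simp only [Set.mem_compl_iff, Set.mem_setOf_eq, not_le] at hx ⊢
    exact lt_of_le_of_lt hrlt.le hx
  calc P {x | M + ε < ENNReal.ofReal (g (dist (T.1 x) θ))}
      ≤ P ({x | ENNReal.ofReal (g (dist (T.1 x) θ)) ≤ r}ᶜ) := measure_mono hsub
    _ = 1 - P {x | ENNReal.ofReal (g (dist (T.1 x) θ)) ≤ r} :=
        prob_compl_eq_one_sub (aux_meas g hg T.1 T.2 θ r)
    _ ≤ 1 - ENNReal.ofReal (1 - δ) := tsub_le_tsub_left hr 1
    _ = ENNReal.ofReal δ := by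
        rw [← ENNReal.ofReal_one, ← ENNReal.ofReal_sub _ (by linarith)]
        norm_num

lemma aux_B (Pfam : Θ → Set (Measure 𝒳)) (hPfam : ∀ θ, ∀ P ∈ Pfam θ, IsProbabilityMeasure P)
    (g : ℝ → ℝ) (hg : MonotoneOn g (Set.Ici 0)) {c δ : ℝ} (hc : c < δ) (hδ : 0 < δ) :
    minimaxQuantile Pfam (fun θ₁ θ₂ => g (dist θ₁ θ₂)) δ ≤
      lowerMinimaxQuantile Pfam (fun θ₁ θ₂ => g (dist θ₁ θ₂)) c := by
  rw [lowerMinimaxQuantile, minimaxQuantile]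
  refine le_sInf fun r hr => ?_
  simp only [Set.mem_setOf_eq] at hr
  have hlt : (⨅ T : {f : 𝒳 → Θ // Measurable f}, ⨆ θ : Θ, ⨆ P ∈ Pfam θ,
      P {x | r < ENNReal.ofReal (g (dist (T.1 x) θ))}) < ENNReal.ofReal δ :=
    lt_of_le_of_lt hr (ENNReal.ofReal_lt_ofReal_iff hδ |>.mpr hc)
  obtain ⟨T, hT⟩ := iInf_lt_iff.mp hlt
  refine le_trans (iInf_le _ T) ?_
  refine iSup_le fun θ => iSup_le fun P => iSup_le fun hP => ?_
  haveI := hPfam θ P hP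
  refine sInf_le ?_
  have h2 := lt_of_le_of_lt (le_iSup _ θ) hT
  have hPr : P {x | r < ENNReal.ofReal (g (dist (T.1 x) θ))} ≤ ENNReal.ofReal δ :=
    le_of_lt (lt_of_le_of_lt
      (le_biSup (fun P' : Measure 𝒳 => P' {x | r < ENNReal.ofReal (g (dist (T.1 x) θ))}) hP) h2)
  have hcompl : {x | r < ENNReal.ofReal (g (dist (T.1 x) θ))}
      = {x | ENNReal.ofReal (g (dist (T.1 x) θ)) ≤ r}ᶜ := by
    ext x; simp [not_le]
  rw [hcompl, prob_compl_eq_one_sub (aux_meas g hg T.1 T.2 θ r)] at hPr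
  have h1 : ENNReal.ofReal (1 - δ) = 1 - ENNReal.ofReal δ := by
    rw [ENNReal.ofReal_sub _ hδ.le, ENNReal.ofReal_one]
  rw [Set.mem_setOf_eq, h1]
  have hle1 : P {x | ENNReal.ofReal (g (dist (T.1 x) θ)) ≤ r} ≤ 1 := prob_le_one
  -- from 1 - a ≤ b deduce 1 - b ≤ a, with a ≤ 1
  have := tsub_le_tsub_left hPr (1 : ℝ≥0∞)
  calc (1 : ℝ≥0∞) - ENNReal.ofReal δ
      ≤ 1 - (1 - P {x | ENNReal.ofReal (g (dist (T.1 x) θ)) ≤ r}) := this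
    _ ≤ P {x | ENNReal.ofReal (g (dist (T.1 x) θ)) ≤ r} := by
        exact tsub_tsub_le_tsub_add.trans (by simp)

end Aux

/-- for all `δ ∈ (0,1]` and `ξ ∈ (0,δ)`,
`M₋(δ) ≤ M(δ) ≤ M₋(δ-ξ)`; moreover `M(δ) = M₋(δ)` at all but countably many `δ ∈ (0,1]`. -/
theorem minimaxQuantile_between_lower
    {Θ 𝒳 : Type*} [PseudoMetricSpace Θ] [Nonempty Θ] [MeasurableSpace Θ] [BorelSpace Θ]
    [MeasurableSpace 𝒳]
    (Pfam : Θ → Set (Measure 𝒳)) (hPfam : ∀ θ, ∀ P ∈ Pfam θ, IsProbabilityMeasure P)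
    (g : ℝ → ℝ) (hg : MonotoneOn g (Set.Ici 0)) (hg0 : ∀ x ∈ Set.Ici (0 : ℝ), 0 ≤ g x) :
    (∀ δ ∈ Set.Ioc (0 : ℝ) 1, ∀ ξ ∈ Set.Ioo (0 : ℝ) δ,
      lowerMinimaxQuantile Pfam (fun θ₁ θ₂ => g (dist θ₁ θ₂)) δ ≤
          minimaxQuantile Pfam (fun θ₁ θ₂ => g (dist θ₁ θ₂)) δ ∧
        minimaxQuantile Pfam (fun θ₁ θ₂ => g (dist θ₁ θ₂)) δ ≤
          lowerMinimaxQuantile Pfam (fun θ₁ θ₂ => g (dist θ₁ θ₂)) (δ - ξ)) ∧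
      Set.Countable {δ ∈ Set.Ioc (0 : ℝ) 1 |
        minimaxQuantile Pfam (fun θ₁ θ₂ => g (dist θ₁ θ₂)) δ ≠
          lowerMinimaxQuantile Pfam (fun θ₁ θ₂ => g (dist θ₁ θ₂)) δ} := by
  constructor
  · intro δ hδ ξ hξ
    exact ⟨aux_A Pfam hPfam g hg hδ.2,
      aux_B Pfam hPfam g hg (by linarith [hξ.1] : δ - ξ < δ) hδ.1⟩
  · have hanti : Antitone (fun δ => lowerMinimaxQuantile Pfam (fun θ₁ θ₂ => g (dist θ₁ θ₂)) δ) := by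
      intro a b hab
      exact sInf_le_sInf fun r hr => le_trans hr (ENNReal.ofReal_le_ofReal hab)
    refine hanti.countable_not_continuousAt.mono fun δ hδmem => ?_
    simp only [Set.mem_sep_iff, Set.mem_setOf_eq] at hδmem ⊢
    obtain ⟨hδ, hne⟩ := hδmem
    intro hcont
    apply hne
    refine le_antisymm ?_ (aux_A Pfam hPfam g hg hδ.2)
    have htend : Filter.Tendsto (fun c => lowerMinimaxQuantile Pfam (fun θ₁ θ₂ => g (dist θ₁ θ₂)) c)
        (nhdsWithin δ (Set.Iio δ))
        (nhds (lowerMinimaxQuantile Pfam (fun θ₁ θ₂ => g (dist θ₁ θ₂)) δ)) :=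
      (hcont.continuousWithinAt (s := Set.Iio δ))
    refine ge_of_tendsto htend ?_
    filter_upwards [eventually_mem_nhdsWithin] with c hc
    exact aux_B Pfam hPfam g hg hc hδ.1
end

section
/- High-probability Le Cam two-point lemma: let δ ∈ (0,1/2), and suppose θ₁,θ₂ ∈ Θ, P₁ ∈ 𝒫_{θ₁} and P₂ ∈ 𝒫_{θ₂} satisfy TV(P₁,P₂) < 1−2δ. Then, writing η := d(θ₁,θ₂)/2, the lower minimax quantile satisfies M_−(δ) ≥ g(η). -/
open MeasureTheory ENNReal

/-- Total variation distance between two measures. -/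
noncomputable def tvDist {𝒳 : Type*} [MeasurableSpace 𝒳] (P Q : Measure 𝒳) : ℝ :=
  ⨆ A : {A : Set 𝒳 // MeasurableSet A}, |(P A.1).toReal - (Q A.1).toReal|

/-!
If an estimator `T` has loss at most `g η` with probability more than `1 - δ` under both `P₁`
and `P₂`, then the test "`T x` is closer to `θ₁` than `η`" separates `P₁` from `P₂` with both
error probabilities below `δ`; since `P₁ B + P₂ Bᶜ ≥ 1 - TV(P₁, P₂)` for every event `B`, this
forces `TV(P₁, P₂) ≥ 1 - 2δ`.
-/

section tvDist

variable {𝒳 : Type*} [MeasurableSpace 𝒳] {P Q : Measure 𝒳}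

lemma abs_toReal_sub_le_tvDist [IsFiniteMeasure P] [IsFiniteMeasure Q] {A : Set 𝒳}
    (hA : MeasurableSet A) : |(P A).toReal - (Q A).toReal| ≤ tvDist P Q := by
  refine le_ciSup (f := fun B : {A : Set 𝒳 // MeasurableSet A} => |(P B.1).toReal - (Q B.1).toReal|)
    ⟨P.real Set.univ + Q.real Set.univ, ?_⟩ ⟨A, hA⟩
  rintro _ ⟨B, rfl⟩
  calc |(P B.1).toReal - (Q B.1).toReal| ≤ P.real B.1 + Q.real B.1 :=
        abs_sub_le_of_nonneg_of_le measureReal_nonneg (le_add_of_nonneg_right measureReal_nonneg)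
          measureReal_nonneg (le_add_of_nonneg_left measureReal_nonneg)
    _ ≤ P.real Set.univ + Q.real Set.univ :=
        add_le_add (measureReal_mono B.1.subset_univ) (measureReal_mono B.1.subset_univ)

lemma tvDist_nonneg [IsFiniteMeasure P] [IsFiniteMeasure Q] : 0 ≤ tvDist P Q :=
  (abs_nonneg _).trans (abs_toReal_sub_le_tvDist MeasurableSet.empty)

lemma ofReal_one_sub_tvDist_div_two_le_max [IsProbabilityMeasure P] [IsProbabilityMeasure Q]
    {B : Set 𝒳} (hB : MeasurableSet B) :
    ENNReal.ofReal ((1 - tvDist P Q) / 2) ≤ max (P B) (Q Bᶜ) := by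
  have hsum : 1 - tvDist P Q ≤ P.real B + Q.real Bᶜ := by
    rw [probReal_compl_eq_one_sub hB]
    linarith [(abs_le.mp (abs_toReal_sub_le_tvDist (P := P) (Q := Q) hB)).1,
      measureReal_def P B, measureReal_def Q B]
  rw [ENNReal.ofReal_le_iff_le_toReal (max_ne_top (measure_ne_top P B) (measure_ne_top Q Bᶜ)),
    ENNReal.toReal_max (measure_ne_top P B) (measure_ne_top Q Bᶜ), ← measureReal_def,
    ← measureReal_def]
  linarith [le_max_left (P.real B) (Q.real Bᶜ), le_max_right (P.real B) (Q.real Bᶜ)]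

end tvDist

lemma dist_div_two_le_of_dist_lt {α : Type*} [PseudoMetricSpace α] {x y z : α}
    (h : dist x y < dist y z / 2) : dist y z / 2 ≤ dist x z := by
  linarith [dist_triangle_left y z x]

noncomputable def worstCaseTailProb {Θ 𝒳 : Type*} [MeasurableSpace 𝒳]
    (Pfam : Θ → Set (Measure 𝒳)) (L : Θ → Θ → ℝ) (T : 𝒳 → Θ) (r : ℝ≥0∞) : ℝ≥0∞ :=
  ⨆ θ : Θ, ⨆ P ∈ Pfam θ, P {x | r < ENNReal.ofReal (L (T x) θ)}

section worstCaseTailProb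

variable {Θ 𝒳 : Type*} [MeasurableSpace 𝒳] {Pfam : Θ → Set (Measure 𝒳)} {L : Θ → Θ → ℝ}

lemma measure_le_worstCaseTailProb {T : 𝒳 → Θ} {r : ℝ≥0∞} {θ : Θ} {P : Measure 𝒳}
    (hP : P ∈ Pfam θ) {s : Set 𝒳} (hs : s ⊆ {x | r < ENNReal.ofReal (L (T x) θ)}) :
    P s ≤ worstCaseTailProb Pfam L T r :=
  le_iSup_of_le θ <| le_iSup₂_of_le P hP (measure_mono hs)

lemma le_lowerMinimaxQuantile [MeasurableSpace Θ] {δ : ℝ} {c ε : ℝ≥0∞}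
    (hε : ENNReal.ofReal δ < ε)
    (h : ∀ r < c, ∀ T : 𝒳 → Θ, Measurable T → ε ≤ worstCaseTailProb Pfam L T r) :
    c ≤ lowerMinimaxQuantile Pfam L δ := by
  refine le_sInf fun r hr => le_of_not_gt fun hrc => hε.not_ge ?_
  exact (le_iInf fun T : {f : 𝒳 → Θ // Measurable f} => h r hrc T.1 T.2).trans hr

lemma ofReal_one_sub_tvDist_div_two_le_worstCaseTailProb [PseudoMetricSpace Θ]
    [MeasurableSpace Θ] [OpensMeasurableSpace Θ] {g : ℝ → ℝ} (hg : MonotoneOn g (Set.Ici 0))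
    {θ₁ θ₂ : Θ} {P₁ P₂ : Measure 𝒳} [IsProbabilityMeasure P₁] [IsProbabilityMeasure P₂]
    (hP₁ : P₁ ∈ Pfam θ₁) (hP₂ : P₂ ∈ Pfam θ₂) {T : 𝒳 → Θ} (hT : Measurable T) {r : ℝ≥0∞}
    (hr : r < ENNReal.ofReal (g (dist θ₁ θ₂ / 2))) :
    ENNReal.ofReal ((1 - tvDist P₁ P₂) / 2) ≤
      worstCaseTailProb Pfam (fun a b => g (dist a b)) T r := by
  set η := dist θ₁ θ₂ / 2
  have hexceeds : ∀ θ x, η ≤ dist (T x) θ → r < ENNReal.ofReal (g (dist (T x) θ)) :=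
    fun θ x hx => hr.trans_le <| ENNReal.ofReal_le_ofReal <|
      hg (Set.mem_Ici.2 (by positivity)) (Set.mem_Ici.2 dist_nonneg) hx
  set B := {x | η ≤ dist (T x) θ₁}
  have hB : MeasurableSet B :=
    hT (isClosed_le continuous_const (continuous_id.dist continuous_const)).measurableSet
  refine (ofReal_one_sub_tvDist_div_two_le_max hB).trans (max_le ?_ ?_)
  · exact measure_le_worstCaseTailProb hP₁ fun x hx => hexceeds θ₁ x hx
  · exact measure_le_worstCaseTailProb hP₂ fun x hx =>
      hexceeds θ₂ x (dist_div_two_le_of_dist_lt (lt_of_not_ge hx))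

end worstCaseTailProb

theorem lowerMinimaxQuantile_ge_of_tvDist_lt_general
    {Θ 𝒳 : Type*} [PseudoMetricSpace Θ] [MeasurableSpace Θ] [BorelSpace Θ]
    [MeasurableSpace 𝒳]
    (Pfam : Θ → Set (Measure 𝒳)) (hPfam : ∀ θ, ∀ P ∈ Pfam θ, IsProbabilityMeasure P)
    (g : ℝ → ℝ) (hg : MonotoneOn g (Set.Ici 0))
    (δ : ℝ) (hδ : δ ∈ Set.Ioo (0 : ℝ) (1/2))
    (θ₁ θ₂ : Θ) (P₁ P₂ : Measure 𝒳) (hP₁ : P₁ ∈ Pfam θ₁) (hP₂ : P₂ ∈ Pfam θ₂)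
    (hTV : tvDist P₁ P₂ < 1 - 2 * δ) :
    ENNReal.ofReal (g (dist θ₁ θ₂ / 2)) ≤
      lowerMinimaxQuantile Pfam (fun a b => g (dist a b)) δ := by
  have := hPfam θ₁ P₁ hP₁
  have := hPfam θ₂ P₂ hP₂
  refine le_lowerMinimaxQuantile ?_ fun r hr T hT =>
    ofReal_one_sub_tvDist_div_two_le_worstCaseTailProb hg hP₁ hP₂ hT hr
  rw [ENNReal.ofReal_lt_ofReal_iff']
  constructor <;> linarith [hδ.1, tvDist_nonneg (P := P₁) (Q := P₂)]

/-- high-probability Le Cam two-point lemma. -/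
theorem lowerMinimaxQuantile_ge_of_tvDist_lt
    {Θ 𝒳 : Type*} [PseudoMetricSpace Θ] [Nonempty Θ] [MeasurableSpace Θ] [BorelSpace Θ]
    [MeasurableSpace 𝒳]
    (Pfam : Θ → Set (Measure 𝒳)) (hPfam : ∀ θ, ∀ P ∈ Pfam θ, IsProbabilityMeasure P)
    (g : ℝ → ℝ) (hg : MonotoneOn g (Set.Ici 0)) (hg0 : ∀ x ∈ Set.Ici (0 : ℝ), 0 ≤ g x)
    (δ : ℝ) (hδ : δ ∈ Set.Ioo (0 : ℝ) (1/2))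
    (θ₁ θ₂ : Θ) (P₁ P₂ : Measure 𝒳) (hP₁ : P₁ ∈ Pfam θ₁) (hP₂ : P₂ ∈ Pfam θ₂)
    (hTV : tvDist P₁ P₂ < 1 - 2 * δ) :
    ENNReal.ofReal (g (dist θ₁ θ₂ / 2)) ≤
      lowerMinimaxQuantile Pfam (fun a b => g (dist a b)) δ :=
  lowerMinimaxQuantile_ge_of_tvDist_lt_general Pfam hPfam g hg δ hδ θ₁ θ₂ P₁ P₂ hP₁ hP₂ hTV
end

section
/- Kullback–Leibler version of the high-probability two-point bound: let δ ∈ (0,1/2), and suppose θ₁,θ₂ ∈ Θ, P₁ ∈ 𝒫_{θ₁} and P₂ ∈ 𝒫_{θ₂} satisfy KL(P₁,P₂) < log(1/(4δ(1−δ))). Then, writing η := d(θ₁,θ₂)/2, the lower minimax quantile satisfies M_−(δ) ≥ g(η). -/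
open MeasureTheory ENNReal
open scoped Classical

/-- Kullback--Leibler divergence: `∫ log(dP/dQ) dP` when `P ≪ Q` (and the log-likelihood
ratio is `P`-integrable), and `+∞` otherwise. -/
noncomputable def klDiv' {𝒳 : Type*} [MeasurableSpace 𝒳] (P Q : Measure 𝒳) : ℝ≥0∞ :=
  if P ≪ Q ∧ Integrable (llr P Q) P then ENNReal.ofReal (∫ x, llr P Q x ∂P) else ⊤

/-!
Two-point argument. For an estimator `T`, let `E` be the event that `T` lies outside the ball of
radius `η = d(θ₁, θ₂)/2` around `θ₁`. The two balls of radius `η` are disjoint, so any loss level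
`r < g η` is exceeded on `E` under `θ₁` and on `Eᶜ` under `θ₂`; hence `T` fails with probability at
least `max (P₁ E) (P₂ Eᶜ)`. Jensen's inequality and Cauchy–Schwarz applied to the Bhattacharyya
integral `∫ exp (-llr P₁ P₂ / 2) dP₁` give `exp (-KL) ≤ s (2 - s)` with `s = P₁ E + P₂ Eᶜ`, so the
hypothesis `exp (-KL) > 4δ(1 - δ)` forces `s ≥ 2δ'`, for some `δ' > δ` chosen independently of `T`.
-/

open Filter Topology

section
variable {α : Type*} [MeasurableSpace α] {P Q : Measure α}

lemma setLIntegral_exp_neg_llr_le [SigmaFinite P] [SigmaFinite Q] (hPQ : P ≪ Q) (s : Set α) :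
    ∫⁻ x in s, ENNReal.ofReal (Real.exp (-llr P Q x)) ∂P ≤ Q s :=
  calc ∫⁻ x in s, ENNReal.ofReal (Real.exp (-llr P Q x)) ∂P
      = ∫⁻ x in s, ENNReal.ofReal (Q.rnDeriv P x).toReal ∂P :=
        lintegral_congr_ae <| ae_restrict_of_ae <| (exp_neg_llr hPQ).mono fun _ hx =>
          congrArg ENNReal.ofReal hx
    _ ≤ ∫⁻ x in s, Q.rnDeriv P x ∂P := lintegral_mono fun _ => ofReal_toReal_le
    _ ≤ Q s := Measure.setLIntegral_rnDeriv_le s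

lemma setLIntegral_exp_neg_half_llr_le [SigmaFinite P] [SigmaFinite Q] (hPQ : P ≪ Q)
    (s : Set α) :
    ∫⁻ x in s, ENNReal.ofReal (Real.exp (-llr P Q x / 2)) ∂P ≤ Q s ^ (1/2 : ℝ) * P s ^ (1/2 : ℝ) := by
  have hsq (x : α) : ENNReal.ofReal (Real.exp (-llr P Q x / 2)) ^ (2 : ℝ) =
      ENNReal.ofReal (Real.exp (-llr P Q x)) := by
    rw [ofReal_rpow_of_nonneg (Real.exp_nonneg _) zero_le_two, ← Real.exp_mul]
    ring_nf
  calc ∫⁻ x in s, ENNReal.ofReal (Real.exp (-llr P Q x / 2)) ∂P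
      = ∫⁻ x in s, ENNReal.ofReal (Real.exp (-llr P Q x / 2)) * 1 ∂P := by simp only [mul_one]
    _ ≤ (∫⁻ x in s, ENNReal.ofReal (Real.exp (-llr P Q x / 2)) ^ (2 : ℝ) ∂P) ^ (1/2 : ℝ) *
          (∫⁻ _ in s, 1 ^ (2 : ℝ) ∂P) ^ (1/2 : ℝ) :=
        ENNReal.lintegral_mul_le_Lp_mul_Lq _ Real.HolderConjugate.two_two (by fun_prop)
          aemeasurable_const
    _ ≤ Q s ^ (1/2 : ℝ) * P s ^ (1/2 : ℝ) := by
        simp_rw [hsq, one_rpow, setLIntegral_const, one_mul]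
        gcongr
        exact setLIntegral_exp_neg_llr_le hPQ s

lemma integrable_exp_neg_half_llr [IsFiniteMeasure P] [IsFiniteMeasure Q] (hPQ : P ≪ Q) :
    Integrable (fun x => Real.exp (-llr P Q x / 2)) P := by
  refine ⟨by fun_prop, ?_⟩
  rw [hasFiniteIntegral_iff_ofReal (ae_of_all _ fun _ => Real.exp_nonneg _), ← setLIntegral_univ]
  exact (setLIntegral_exp_neg_half_llr_le hPQ _).trans_lt <|
    mul_lt_top (rpow_lt_top_of_nonneg (by norm_num) (measure_ne_top _ _))
      (rpow_lt_top_of_nonneg (by norm_num) (measure_ne_top _ _))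

lemma setIntegral_exp_neg_half_llr_le [IsFiniteMeasure P] [IsFiniteMeasure Q] (hPQ : P ≪ Q)
    (s : Set α) :
    ∫ x in s, Real.exp (-llr P Q x / 2) ∂P ≤ √(Q.real s) * √(P.real s) := by
  rw [integral_eq_lintegral_of_nonneg_ae (ae_of_all _ fun _ => Real.exp_nonneg _) (by fun_prop),
    Real.sqrt_eq_rpow, Real.sqrt_eq_rpow, measureReal_def, measureReal_def, toReal_rpow,
    toReal_rpow, ← toReal_mul]
  exact toReal_mono (mul_ne_top (rpow_ne_top_of_nonneg (by norm_num) (measure_ne_top _ _))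
      (rpow_ne_top_of_nonneg (by norm_num) (measure_ne_top _ _)))
    (setLIntegral_exp_neg_half_llr_le hPQ s)

lemma exp_neg_half_integral_llr_le [IsProbabilityMeasure P] [IsFiniteMeasure Q] (hPQ : P ≪ Q)
    (hint : Integrable (llr P Q) P) :
    Real.exp (-(∫ x, llr P Q x ∂P) / 2) ≤ ∫ x, Real.exp (-llr P Q x / 2) ∂P := by
  rw [← integral_neg, ← integral_div]
  exact convexOn_exp.map_integral_le Real.continuous_exp.continuousOn isClosed_univ
    (ae_of_all _ fun _ => Set.mem_univ _) (hint.neg.div_const 2) (integrable_exp_neg_half_llr hPQ)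

lemma exp_neg_integral_llr_le_mul [IsProbabilityMeasure P] [IsFiniteMeasure Q] (hPQ : P ≪ Q)
    (hint : Integrable (llr P Q) P) {E : Set α} (hE : MeasurableSet E) :
    Real.exp (-∫ x, llr P Q x ∂P) ≤ (P.real E + Q.real Eᶜ) * (P.real Eᶜ + Q.real E) := by
  have hsplit : Real.exp (-(∫ x, llr P Q x ∂P) / 2) ≤
      √(Q.real E) * √(P.real E) + √(Q.real Eᶜ) * √(P.real Eᶜ) :=
    calc Real.exp (-(∫ x, llr P Q x ∂P) / 2) ≤ ∫ x, Real.exp (-llr P Q x / 2) ∂P :=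
          exp_neg_half_integral_llr_le hPQ hint
      _ = ∫ x in E, Real.exp (-llr P Q x / 2) ∂P + ∫ x in Eᶜ, Real.exp (-llr P Q x / 2) ∂P :=
          (integral_add_compl hE (integrable_exp_neg_half_llr hPQ)).symm
      _ ≤ _ := add_le_add (setIntegral_exp_neg_half_llr_le hPQ E)
          (setIntegral_exp_neg_half_llr_le hPQ Eᶜ)
  calc Real.exp (-∫ x, llr P Q x ∂P) = Real.exp (-(∫ x, llr P Q x ∂P) / 2) ^ 2 := by
        rw [← Real.exp_nat_mul]; ring_nf
    _ ≤ (√(Q.real E) * √(P.real E) + √(Q.real Eᶜ) * √(P.real Eᶜ)) ^ 2 := by gcongr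
    -- Cauchy–Schwarz for the vectors `(√(P E), √(Q Eᶜ))` and `(√(Q E), √(P Eᶜ))`
    _ ≤ (P.real E + Q.real Eᶜ) * (P.real Eᶜ + Q.real E) := by
      nlinarith [sq_nonneg (√(P.real E) * √(P.real Eᶜ) - √(Q.real Eᶜ) * √(Q.real E)),
        Real.sq_sqrt (measureReal_nonneg (μ := P) (s := E)),
        Real.sq_sqrt (measureReal_nonneg (μ := P) (s := Eᶜ)),
        Real.sq_sqrt (measureReal_nonneg (μ := Q) (s := E)),
        Real.sq_sqrt (measureReal_nonneg (μ := Q) (s := Eᶜ))]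

lemma ofReal_le_max_measure_of_lt_exp_neg_integral_llr [IsProbabilityMeasure P]
    [IsProbabilityMeasure Q] (hPQ : P ≪ Q) (hint : Integrable (llr P Q) P) {δ : ℝ}
    (hδ : δ ≤ 1 / 2) (hδKL : 4 * δ * (1 - δ) < Real.exp (-∫ x, llr P Q x ∂P))
    {E : Set α} (hE : MeasurableSet E) :
    ENNReal.ofReal δ ≤ max (P E) (Q Eᶜ) := by
  by_contra! h
  rw [max_lt_iff] at h
  have hPE : P.real E < δ := toReal_lt_of_lt_ofReal h.1
  have hQE : Q.real Eᶜ < δ := toReal_lt_of_lt_ofReal h.2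
  have hPEc : P.real Eᶜ = 1 - P.real E := probReal_compl_eq_one_sub hE
  have hQEc : Q.real E = 1 - Q.real Eᶜ := by rw [probReal_compl_eq_one_sub hE]; ring
  have hBH := exp_neg_integral_llr_le_mul hPQ hint hE
  rw [hPEc, hQEc] at hBH
  -- `t ↦ t (2 - t)` is increasing on `[0, 1]` and `P E + Q Eᶜ < 2δ ≤ 1`
  nlinarith [measureReal_nonneg (μ := P) (s := E), measureReal_nonneg (μ := Q) (s := Eᶜ)]

lemma integral_llr_lt_of_klDiv'_lt {x : ℝ} (h : klDiv' P Q < ENNReal.ofReal x) :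
    P ≪ Q ∧ Integrable (llr P Q) P ∧ ∫ a, llr P Q a ∂P < x := by
  unfold klDiv' at h
  split_ifs at h with hPQ
  · exact ⟨hPQ.1, hPQ.2, (ofReal_lt_ofReal_iff'.mp h).1⟩
  · exact absurd h not_top_lt

end

lemma ofReal_le_lowerMinimaxQuantile_of_le_max {Θ 𝒳 : Type*} [PseudoMetricSpace Θ]
    [MeasurableSpace Θ] [OpensMeasurableSpace Θ] [MeasurableSpace 𝒳] {Pfam : Θ → Set (Measure 𝒳)}
    {g : ℝ → ℝ} (hg : MonotoneOn g (Set.Ici 0)) {δ : ℝ} {c : ℝ≥0∞} (hc : ENNReal.ofReal δ < c)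
    {θ₁ θ₂ : Θ} {P₁ P₂ : Measure 𝒳} (hP₁ : P₁ ∈ Pfam θ₁) (hP₂ : P₂ ∈ Pfam θ₂)
    (htest : ∀ E, MeasurableSet E → c ≤ max (P₁ E) (P₂ Eᶜ)) :
    ENNReal.ofReal (g (dist θ₁ θ₂ / 2)) ≤ lowerMinimaxQuantile Pfam (fun a b => g (dist a b)) δ := by
  refine le_sInf fun r hr => ?_
  by_contra! hr_lt
  set η := dist θ₁ θ₂ / 2
  refine (hc.trans_le ?_).not_ge hr
  refine le_iInf fun T => ?_
  have hrisk (θ : Θ) (P : Measure 𝒳) (hP : P ∈ Pfam θ) :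
      P (T.1 ⁻¹' (Metric.ball θ η)ᶜ) ≤
        ⨆ θ, ⨆ P ∈ Pfam θ, P {x | r < ENNReal.ofReal (g (dist (T.1 x) θ))} := by
    refine le_iSup_of_le θ (le_iSup₂_of_le P hP (measure_mono fun x hx => ?_))
    have hη : η ∈ Set.Ici 0 := by simp only [Set.mem_Ici, η]; positivity
    have hηx : η ≤ dist (T.1 x) θ := by simpa using hx
    exact hr_lt.trans_le (ofReal_le_ofReal (hg hη dist_nonneg hηx))
  have hsep : (T.1 ⁻¹' (Metric.ball θ₁ η)ᶜ)ᶜ ⊆ T.1 ⁻¹' (Metric.ball θ₂ η)ᶜ := by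
    rw [← Set.preimage_compl, compl_compl]
    exact Set.preimage_mono (Metric.ball_disjoint_ball (by simp [η])).subset_compl_right
  rcases le_max_iff.mp (htest _ (T.2 measurableSet_ball.compl)) with h | h
  · exact h.trans (hrisk θ₁ P₁ hP₁)
  · exact h.trans ((measure_mono hsep).trans (hrisk θ₂ P₂ hP₂))

theorem lowerMinimaxQuantile_ge_of_klDiv_lt_general
    {Θ 𝒳 : Type*} [PseudoMetricSpace Θ] [MeasurableSpace Θ] [BorelSpace Θ]
    [MeasurableSpace 𝒳]
    (Pfam : Θ → Set (Measure 𝒳)) (hPfam : ∀ θ, ∀ P ∈ Pfam θ, IsProbabilityMeasure P)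
    (g : ℝ → ℝ) (hg : MonotoneOn g (Set.Ici 0))
    (δ : ℝ) (hδ : δ ∈ Set.Ioo (0 : ℝ) (1/2))
    (θ₁ θ₂ : Θ) (P₁ P₂ : Measure 𝒳) (hP₁ : P₁ ∈ Pfam θ₁) (hP₂ : P₂ ∈ Pfam θ₂)
    (hKL : klDiv' P₁ P₂ < ENNReal.ofReal (Real.log (1 / (4 * δ * (1 - δ))))) :
    ENNReal.ofReal (g (dist θ₁ θ₂ / 2)) ≤
      lowerMinimaxQuantile Pfam (fun a b => g (dist a b)) δ := by
  have := hPfam θ₁ P₁ hP₁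
  have := hPfam θ₂ P₂ hP₂
  obtain ⟨hac, hint, hk⟩ := integral_llr_lt_of_klDiv'_lt hKL
  have hδKL : 4 * δ * (1 - δ) < Real.exp (-∫ x, llr P₁ P₂ x ∂P₁) := by
    have hpos : 0 < 4 * δ * (1 - δ) := by nlinarith [hδ.1, hδ.2]
    rw [Real.lt_log_iff_exp_lt (by positivity), one_div] at hk
    rwa [Real.exp_neg, lt_inv_comm₀ hpos (Real.exp_pos _)]
  have hnear : ∀ᶠ t in 𝓝 δ, t < 1 / 2 ∧ 4 * t * (1 - t) < Real.exp (-∫ x, llr P₁ P₂ x ∂P₁) :=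
    (eventually_lt_nhds hδ.2).and (ContinuousAt.eventually_lt (f := fun t => 4 * t * (1 - t))
      (by fun_prop) continuousAt_const hδKL)
  obtain ⟨δ', ⟨hδ'half, hδ'KL⟩, hδδ'⟩ :=
    ((hnear.filter_mono nhdsWithin_le_nhds).and (self_mem_nhdsWithin (s := Set.Ioi δ))).exists
  exact ofReal_le_lowerMinimaxQuantile_of_le_max hg
    (ofReal_lt_ofReal_iff'.mpr ⟨hδδ', hδ.1.trans hδδ'⟩) hP₁ hP₂ fun _ hE =>
    ofReal_le_max_measure_of_lt_exp_neg_integral_llr hac hint hδ'half.le hδ'KL hE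

/-- Kullback--Leibler version of the high-probability two-point bound. -/
theorem lowerMinimaxQuantile_ge_of_klDiv_lt
    {Θ 𝒳 : Type*} [PseudoMetricSpace Θ] [Nonempty Θ] [MeasurableSpace Θ] [BorelSpace Θ]
    [MeasurableSpace 𝒳]
    (Pfam : Θ → Set (Measure 𝒳)) (hPfam : ∀ θ, ∀ P ∈ Pfam θ, IsProbabilityMeasure P)
    (g : ℝ → ℝ) (hg : MonotoneOn g (Set.Ici 0)) (hg0 : ∀ x ∈ Set.Ici (0 : ℝ), 0 ≤ g x)
    (δ : ℝ) (hδ : δ ∈ Set.Ioo (0 : ℝ) (1/2))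
    (θ₁ θ₂ : Θ) (P₁ P₂ : Measure 𝒳) (hP₁ : P₁ ∈ Pfam θ₁) (hP₂ : P₂ ∈ Pfam θ₂)
    (hKL : klDiv' P₁ P₂ < ENNReal.ofReal (Real.log (1 / (4 * δ * (1 - δ))))) :
    ENNReal.ofReal (g (dist θ₁ θ₂ / 2)) ≤
      lowerMinimaxQuantile Pfam (fun a b => g (dist a b)) δ :=
  lowerMinimaxQuantile_ge_of_klDiv_lt_general Pfam hPfam g hg δ hδ θ₁ θ₂ P₁ P₂ hP₁ hP₂ hKL
end

section
/- Conversion of local minimax risk lower bounds into minimax quantile lower bounds: let Θ₀ ⊆ Θ be non-empty with diameter D := sup_{θ₁,θ₂∈Θ₀} d(θ₁,θ₂), and suppose g(D) > 0. Let Δ ∈ [0,∞) be such that inf_{θ̂∈Θ̂} sup_{θ₀∈Θ₀} sup_{P∈𝒫_{θ₀}} E_P[L(θ̂(X),θ₀)] ≥ Δ. Then for every ε > 0 and every δ ∈ (0, (Δ − g(εD))/g((1+ε)D)), we have M_−(δ) ≥ g(εD). -/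
open MeasureTheory ENNReal

/-! If `M₋(δ) < g(εD)`, some level `r < g(εD)` has minimax exceedance probability at most `δ`.
Clip any estimator `T` to a fixed point of `Θ₀` wherever it leaves the `εD`-thickening of `Θ₀`.
At `θ₀ ∈ Θ₀` the clipped estimator has loss at most `g((1+ε)D)` everywhere, and where `T` has
loss at most `r < g(εD)`, `T` is within `εD` of `θ₀` and so is left unchanged. Its local risk is
therefore at most `g(εD) + g((1+ε)D) P(loss of T > r)`; minimizing over `T` gives
`Δ ≤ g(εD) + g((1+ε)D) δ`, which contradicts the choice of `δ`. -/

theorem lintegral_le_add_mul_measure_of_le {α : Type*} [MeasurableSpace α]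
    {μ : Measure α} [IsProbabilityMeasure μ] {f : α → ℝ≥0∞} {E : Set α} {a b : ℝ≥0∞}
    (hb : ∀ x, f x ≤ b) (ha : ∀ x ∉ E, f x ≤ a) :
    ∫⁻ x, f x ∂μ ≤ a + b * μ E := by
  have hpt : ∀ x, f x ≤ a + E.indicator (fun _ => b) x := fun x => by
    by_cases hx : x ∈ E
    · simpa [hx] using (hb x).trans le_add_self
    · simpa [hx] using ha x hx
  calc ∫⁻ x, f x ∂μ ≤ ∫⁻ x, a + E.indicator (fun _ => b) x ∂μ := lintegral_mono hpt
    _ = a + ∫⁻ x, E.indicator (fun _ => b) x ∂μ := by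
      rw [lintegral_add_left measurable_const, lintegral_const, measure_univ, mul_one]
    _ ≤ a + b * μ E := by gcongr; exact lintegral_indicator_const_le E b

section Clipping

variable {Θ 𝒳 : Type*} [PseudoMetricSpace Θ] {s : Set Θ} {ρ D : ℝ} {θ θ₁ : Θ} {T : 𝒳 → Θ}

open Classical in
noncomputable def clipToThickening (s : Set Θ) (ρ : ℝ) (θ₁ : Θ) (T : 𝒳 → Θ) : 𝒳 → Θ :=
  fun x => if T x ∈ Metric.thickening ρ s then T x else θ₁

theorem measurable_clipToThickening [MeasurableSpace Θ] [OpensMeasurableSpace Θ]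
    [MeasurableSpace 𝒳] (hT : Measurable T) : Measurable (clipToThickening s ρ θ₁ T) :=
  Measurable.ite (Metric.isOpen_thickening.measurableSet.preimage hT) hT measurable_const

theorem clipToThickening_of_dist_lt {x : 𝒳} (hθ : θ ∈ s) (h : dist (T x) θ < ρ) :
    clipToThickening s ρ θ₁ T x = T x :=
  if_pos (Metric.mem_thickening_iff.2 ⟨θ, hθ, h⟩)

theorem dist_clipToThickening_le (hθ₁ : θ₁ ∈ s) (hdiam : ∀ a ∈ s, ∀ b ∈ s, dist a b ≤ D)
    (hρ : 0 ≤ ρ) (hθ : θ ∈ s) (x : 𝒳) : dist (clipToThickening s ρ θ₁ T x) θ ≤ ρ + D := by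
  unfold clipToThickening
  split_ifs with hx
  · obtain ⟨z, hz, hxz⟩ := Metric.mem_thickening_iff.1 hx
    calc dist (T x) θ ≤ dist (T x) z + dist z θ := dist_triangle _ _ _
      _ ≤ ρ + D := add_le_add hxz.le (hdiam z hz θ hθ)
  · linarith [hdiam θ₁ hθ₁ θ hθ]

variable [MeasurableSpace 𝒳] {g : ℝ → ℝ} {r : ℝ≥0∞}

theorem lintegral_clipToThickening_le (hg : MonotoneOn g (Set.Ici 0)) (hθ₁ : θ₁ ∈ s)
    (hdiam : ∀ a ∈ s, ∀ b ∈ s, dist a b ≤ D) (hρ : 0 ≤ ρ) (hr : r < ENNReal.ofReal (g ρ))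
    (hθ : θ ∈ s) (P : Measure 𝒳) [IsProbabilityMeasure P] :
    ∫⁻ x, ENNReal.ofReal (g (dist (clipToThickening s ρ θ₁ T x) θ)) ∂P ≤
      ENNReal.ofReal (g ρ) +
        ENNReal.ofReal (g (ρ + D)) * P {x | r < ENNReal.ofReal (g (dist (T x) θ))} := by
  refine lintegral_le_add_mul_measure_of_le (fun x => ?_) (fun x hx => ?_)
  · have hdist := dist_clipToThickening_le (T := T) hθ₁ hdiam hρ hθ x
    exact ENNReal.ofReal_le_ofReal (hg dist_nonneg (dist_nonneg.trans hdist) hdist)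
  · have hle : ENNReal.ofReal (g (dist (T x) θ)) ≤ r := not_lt.1 hx
    have hlt : dist (T x) θ < ρ :=
      hg.reflect_lt dist_nonneg hρ (ofReal_lt_ofReal_iff'.1 (hle.trans_lt hr)).1
    rw [clipToThickening_of_dist_lt hθ hlt]
    exact hle.trans hr.le

theorem localMinimaxRisk_le_add_mul_minimaxExceedance [MeasurableSpace Θ]
    [OpensMeasurableSpace Θ] {Pfam : Θ → Set (Measure 𝒳)}
    (hPfam : ∀ θ, ∀ P ∈ Pfam θ, IsProbabilityMeasure P) (hg : MonotoneOn g (Set.Ici 0))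
    (hθ₁ : θ₁ ∈ s) (hdiam : ∀ a ∈ s, ∀ b ∈ s, dist a b ≤ D) (hρ : 0 ≤ ρ)
    (hr : r < ENNReal.ofReal (g ρ)) :
    (⨅ T : {f : 𝒳 → Θ // Measurable f}, ⨆ θ ∈ s, ⨆ P ∈ Pfam θ,
        ∫⁻ x, ENNReal.ofReal (g (dist (T.1 x) θ)) ∂P) ≤
      ENNReal.ofReal (g ρ) + ENNReal.ofReal (g (ρ + D)) *
        ⨅ T : {f : 𝒳 → Θ // Measurable f}, ⨆ θ, ⨆ P ∈ Pfam θ,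
          P {x | r < ENNReal.ofReal (g (dist (T.1 x) θ))} := by
  rw [ENNReal.mul_iInf' (by simp) fun _ => ⟨⟨fun _ => θ₁, measurable_const⟩⟩, ENNReal.add_iInf]
  refine iInf_mono' fun T =>
    ⟨⟨clipToThickening s ρ θ₁ T.1, measurable_clipToThickening T.2⟩, ?_⟩
  refine iSup₂_le fun θ hθ => iSup₂_le fun P hP => ?_
  have := hPfam θ P hP
  refine (lintegral_clipToThickening_le hg hθ₁ hdiam hρ hr hθ P).trans ?_
  gcongr
  exact (le_iSup₂ (f := fun P (_ : P ∈ Pfam θ) => P _) P hP).trans (le_iSup_of_le θ le_rfl)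

end Clipping

theorem lowerMinimaxQuantile_ge_of_local_risk_bound_general
    {Θ 𝒳 : Type*} [PseudoMetricSpace Θ] [MeasurableSpace Θ] [BorelSpace Θ]
    [MeasurableSpace 𝒳]
    (Pfam : Θ → Set (Measure 𝒳)) (hPfam : ∀ θ, ∀ P ∈ Pfam θ, IsProbabilityMeasure P)
    (g : ℝ → ℝ) (hg : MonotoneOn g (Set.Ici 0)) (hg0 : ∀ x ∈ Set.Ici (0 : ℝ), 0 ≤ g x)
    (Θ₀ : Set Θ) (hΘ₀ : Θ₀.Nonempty)
    (D : ℝ) (hD : IsLUB {x : ℝ | ∃ θ₁ ∈ Θ₀, ∃ θ₂ ∈ Θ₀, x = dist θ₁ θ₂} D)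
    (hgD : 0 < g D)
    (Δ : ℝ)
    (hΔ : ENNReal.ofReal Δ ≤
      ⨅ T : {f : 𝒳 → Θ // Measurable f}, ⨆ θ₀ ∈ Θ₀, ⨆ P ∈ Pfam θ₀,
        ∫⁻ x, ENNReal.ofReal (g (dist (T.1 x) θ₀)) ∂P) :
    ∀ ε : ℝ, 0 < ε → ∀ δ : ℝ, 0 < δ → δ < (Δ - g (ε * D)) / g ((1 + ε) * D) →
      ENNReal.ofReal (g (ε * D)) ≤
        lowerMinimaxQuantile Pfam (fun a b => g (dist a b)) δ := by
  intro ε hε δ hδ hδlt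
  obtain ⟨θ₁, hθ₁⟩ := hΘ₀
  have hdiam : ∀ a ∈ Θ₀, ∀ b ∈ Θ₀, dist a b ≤ D := fun a ha b hb => hD.1 ⟨a, ha, b, hb, rfl⟩
  have hD0 : 0 ≤ D := dist_nonneg.trans (hdiam θ₁ hθ₁ θ₁ hθ₁)
  have hεD : 0 ≤ ε * D := by positivity
  have hg1εD : 0 < g ((1 + ε) * D) :=
    hgD.trans_le (hg hD0 (Set.mem_Ici.2 (by positivity)) (by nlinarith))
  refine le_sInf fun r hr => not_lt.1 fun hr_lt => ?_
  have hrisk : ENNReal.ofReal Δ ≤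
      ENNReal.ofReal (g (ε * D)) + ENNReal.ofReal (g (ε * D + D)) * ENNReal.ofReal δ := by
    refine hΔ.trans <|
      (localMinimaxRisk_le_add_mul_minimaxExceedance hPfam hg hθ₁ hdiam hεD hr_lt).trans ?_
    gcongr
    exact hr
  rw [show ε * D + D = (1 + ε) * D by ring, ← ENNReal.ofReal_mul hg1εD.le,
    ← ENNReal.ofReal_add (hg0 _ hεD) (by positivity),
    ENNReal.ofReal_le_ofReal_iff (add_nonneg (hg0 _ hεD) (by positivity))] at hrisk
  rw [lt_div_iff₀ hg1εD] at hδlt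
  linarith

/-- conversion of local minimax risk lower bounds into lower bounds on the lower
minimax quantile. -/
theorem lowerMinimaxQuantile_ge_of_local_risk_bound
    {Θ 𝒳 : Type*} [PseudoMetricSpace Θ] [Nonempty Θ] [MeasurableSpace Θ] [BorelSpace Θ]
    [MeasurableSpace 𝒳]
    (Pfam : Θ → Set (Measure 𝒳)) (hPfam : ∀ θ, ∀ P ∈ Pfam θ, IsProbabilityMeasure P)
    (g : ℝ → ℝ) (hg : MonotoneOn g (Set.Ici 0)) (hg0 : ∀ x ∈ Set.Ici (0 : ℝ), 0 ≤ g x)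
    (Θ₀ : Set Θ) (hΘ₀ : Θ₀.Nonempty)
    (D : ℝ) (hD : IsLUB {x : ℝ | ∃ θ₁ ∈ Θ₀, ∃ θ₂ ∈ Θ₀, x = dist θ₁ θ₂} D)
    (hgD : 0 < g D)
    (Δ : ℝ) (hΔ0 : 0 ≤ Δ)
    (hΔ : ENNReal.ofReal Δ ≤
      ⨅ T : {f : 𝒳 → Θ // Measurable f}, ⨆ θ₀ ∈ Θ₀, ⨆ P ∈ Pfam θ₀,
        ∫⁻ x, ENNReal.ofReal (g (dist (T.1 x) θ₀)) ∂P) :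
    ∀ ε : ℝ, 0 < ε → ∀ δ : ℝ, 0 < δ → δ < (Δ - g (ε * D)) / g ((1 + ε) * D) →
      ENNReal.ofReal (g (ε * D)) ≤
        lowerMinimaxQuantile Pfam (fun a b => g (dist a b)) δ :=
  lowerMinimaxQuantile_ge_of_local_risk_bound_general Pfam hPfam g hg hg0 Θ₀ hΘ₀ D hD hgD Δ hΔ
end

section
/- Boosting of the quantile level: suppose Θ is a non-empty Polish space, g is continuous, and there exists A > 0 such that L(θ₁,θ₂) ≤ A{L(θ₁,θ₃) + L(θ₂,θ₃)} for all θ₁,θ₂,θ₃ ∈ Θ. Define h : [0,1] → [0,1] by h(x) := x³ + 3x²(1−x), let h^{∘m} denote its m-fold composition, and fix δ_− ∈ (0,1/2) and δ_+ ∈ (δ_−,1/2). Then there exists k ∈ ℕ such that h^{∘k}(δ_+) ≤ δ_−; moreover, for any such k and every δ ∈ (0,δ_+], one has M_−(δ, 𝒫_Θ, L) ≥ (2A)^{−k} · M_−(δ_−, 𝒫_Θ^{⊗3^k}, L). -/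
/-!
Split a sample of size `3^k` into three blocks and run, on each block, an estimator whose loss
exceeds `t` with probability at most `q`. Aggregate the three estimates into a point `ŝ` within
`r ≈ t` of two of them (the first such point of a dense sequence of the separable space `Θ`,
which keeps `ŝ` measurable). If two estimates are within `t` of `θ`, this pair and the pair
chosen by `ŝ` share an estimate, so the quasi-triangle inequality bounds the loss of `ŝ` by
`A (r + t) ≈ 2 A t`; and two of three independent blocks fail with probability at most
`h(q) = q³ + 3 q² (1 - q)`. Iterating `k` times turns a level-`δ` estimator with loss `t` into a
level-`h^k(δ)` estimator on `3^k` samples with loss `(2A)^k t`, and `h^k(δ) ≤ h^k(δ₊) ≤ δ₋`.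
Such a `k` exists since `h(x) ≤ δ₊ (3 - 2 δ₊) x` on `[0, δ₊]`, a contraction for `δ₊ < 1/2`.
-/
open MeasureTheory ENNReal

/-- The family of `m`-fold product measures `P^{⊗m}` for `P ∈ Pfam θ`. -/
noncomputable def prodFamily {Θ 𝒳 : Type*} [MeasurableSpace 𝒳]
    (Pfam : Θ → Set (Measure 𝒳)) (m : ℕ) : Θ → Set (Measure (Fin m → 𝒳)) :=
  fun θ => (fun P => Measure.pi fun _ : Fin m => P) '' Pfam θ

open Set Filter Topology

/-- The probability that at least two of three independent events of probability `x` occur. -/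
def majorityProb (x : ℝ) : ℝ := x ^ 3 + 3 * x ^ 2 * (1 - x)

theorem continuous_majorityProb : Continuous majorityProb := by
  unfold majorityProb; fun_prop

theorem mapsTo_majorityProb : MapsTo majorityProb (Icc 0 1) (Icc 0 1) := by
  rintro x ⟨hx0, hx1⟩
  unfold majorityProb
  constructor <;> nlinarith [mul_nonneg (mul_nonneg hx0 hx0) (sub_nonneg.2 hx1),
    mul_nonneg (sq_nonneg (1 - x)) hx0]

theorem monotoneOn_majorityProb : MonotoneOn majorityProb (Icc 0 1) := by
  rintro x ⟨hx0, -⟩ y ⟨-, hy1⟩ hxy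
  have hyx := sub_nonneg.2 hxy
  unfold majorityProb
  nlinarith [mul_nonneg (mul_nonneg hyx hx0) (sub_nonneg.2 (hxy.trans hy1)),
    mul_nonneg (mul_nonneg hyx (hx0.trans hxy)) (sub_nonneg.2 hy1)]

theorem MonotoneOn.iterate_of_mapsTo {α : Type*} [Preorder α] {f : α → α} {s : Set α}
    (hf : MonotoneOn f s) (hs : MapsTo f s s) (n : ℕ) : MonotoneOn f^[n] s := by
  induction n with
  | zero => exact monotoneOn_id
  | succ n ih =>
    intro x hx y hy hxy
    simp only [Function.iterate_succ_apply]
    exact ih (hs hx) (hs hy) (hf hx hy hxy)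

theorem majorityProb_le_mul {x y : ℝ} (hy : 0 ≤ y) (hyx : y ≤ x) (hx : x ≤ 3 / 4) :
    majorityProb y ≤ x * (3 - 2 * x) * y := by
  unfold majorityProb
  nlinarith [mul_nonneg (mul_nonneg hy (sub_nonneg.2 hyx))
    (by linarith : (0 : ℝ) ≤ 3 - 2 * (x + y))]

theorem iterate_majorityProb_le_pow_mul {x : ℝ} (hx : x ∈ Icc 0 (1 / 2)) (k : ℕ) :
    majorityProb^[k] x ≤ (x * (3 - 2 * x)) ^ k * x := by
  obtain ⟨hx0, hx1⟩ := hx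
  have hc0 : 0 ≤ x * (3 - 2 * x) := by nlinarith
  have hc1 : x * (3 - 2 * x) ≤ 1 := by nlinarith
  induction k with
  | zero => simp
  | succ k ih =>
    have hk := mapsTo_majorityProb.iterate k ⟨hx0, by linarith⟩
    have hkx : majorityProb^[k] x ≤ x :=
      ih.trans (mul_le_of_le_one_left hx0 (pow_le_one₀ hc0 hc1))
    rw [Function.iterate_succ_apply', pow_succ', mul_assoc]
    exact (majorityProb_le_mul hk.1 hkx (by linarith)).trans (by gcongr)

theorem tendsto_iterate_majorityProb {x : ℝ} (hx0 : 0 ≤ x) (hx : x < 1 / 2) :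
    Tendsto (fun k => majorityProb^[k] x) atTop (𝓝 0) := by
  have hc0 : 0 ≤ x * (3 - 2 * x) := by nlinarith
  have hc1 : x * (3 - 2 * x) < 1 := by nlinarith
  refine squeeze_zero (fun k => (mapsTo_majorityProb.iterate k ⟨hx0, by linarith⟩).1)
    (iterate_majorityProb_le_pow_mul ⟨hx0, hx.le⟩) ?_
  simpa using (tendsto_pow_atTop_nhds_zero_of_lt_one hc0 hc1).mul_const x

theorem ENNReal.le_of_forall_lt_ofReal {a b : ℝ≥0∞}
    (h : ∀ t : ℝ, a < ENNReal.ofReal t → b ≤ ENNReal.ofReal t) : b ≤ a := by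
  refine le_of_forall_gt_imp_ge_of_dense fun r hr => ?_
  rcases eq_or_ne r ⊤ with rfl | hr_top
  · exact le_top
  rw [← ofReal_toReal hr_top] at hr ⊢
  exact h _ hr

section Quantile

variable {Θ Z : Type*} [MeasurableSpace Θ] [MeasurableSpace Z]
  {Q : Θ → Set (Measure Z)} {L : Θ → Θ → ℝ} {t q : ℝ}

def AttainsQuantile (Q : Θ → Set (Measure Z)) (L : Θ → Θ → ℝ) (t q : ℝ) : Prop :=
  ∃ T : Z → Θ, Measurable T ∧ ∀ θ, ∀ P ∈ Q θ, P {z | t < L (T z) θ} ≤ ENNReal.ofReal q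

theorem AttainsQuantile.mono {s r : ℝ} (h : AttainsQuantile Q L t q) (hts : t ≤ s)
    (hqr : q ≤ r) : AttainsQuantile Q L s r := by
  obtain ⟨T, hT, hTq⟩ := h
  refine ⟨T, hT, fun θ P hP => ?_⟩
  calc P {z | s < L (T z) θ} ≤ P {z | t < L (T z) θ} :=
        measure_mono fun z (hz : s < _) => hts.trans_lt hz
    _ ≤ ENNReal.ofReal r := (hTq θ P hP).trans (ofReal_le_ofReal hqr)

theorem AttainsQuantile.of_map {Z' : Type*} [MeasurableSpace Z'] {Q' : Θ → Set (Measure Z')}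
    (h : AttainsQuantile Q' L t q) {f : Z → Z'} (hf : Measurable f)
    (hQ : ∀ θ, ∀ P ∈ Q θ, P.map f ∈ Q' θ) : AttainsQuantile Q L t q := by
  obtain ⟨T, hT, hTq⟩ := h
  exact ⟨T ∘ f, hT.comp hf, fun θ P hP =>
    (Measure.le_map_apply hf.aemeasurable _).trans (hTq θ _ (hQ θ P hP))⟩

theorem lowerMinimaxQuantile_le_ofReal {δ : ℝ} (hδ : 0 ≤ δ)
    (h : ∀ s > t, ∀ q > δ, AttainsQuantile Q L s q) :
    lowerMinimaxQuantile Q L δ ≤ ENNReal.ofReal t := by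
  refine ENNReal.le_of_forall_lt_ofReal fun s hs => sInf_le ?_
  rw [ENNReal.ofReal_lt_ofReal_iff'] at hs
  refine ENNReal.le_of_forall_pos_le_add fun ε hε _ => ?_
  obtain ⟨T, hT, hTq⟩ := h s hs.1 (δ + ε) (by simpa using hε)
  refine iInf_le_of_le ⟨T, hT⟩ (iSup_le fun θ => iSup₂_le fun P hP => ?_)
  calc P {x | ENNReal.ofReal s < ENNReal.ofReal (L (T x) θ)}
      ≤ P {x | s < L (T x) θ} := measure_mono fun x hx => (ofReal_lt_ofReal_iff'.1 hx).1
    _ ≤ ENNReal.ofReal (δ + ε) := hTq θ P hP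
    _ = ENNReal.ofReal δ + ε := by rw [ENNReal.ofReal_add hδ ε.coe_nonneg, ofReal_coe_nnreal]

theorem AttainsQuantile.of_lowerMinimaxQuantile_lt {δ : ℝ} (hδ : 0 ≤ δ) (hδq : δ < q)
    (h : lowerMinimaxQuantile Q L δ < ENNReal.ofReal t) : AttainsQuantile Q L t q := by
  obtain ⟨r, hr, hrt⟩ := sInf_lt_iff.1 h
  obtain ⟨⟨T, hT⟩, hTq⟩ := iInf_lt_iff.1 (hr.trans_lt ((ofReal_lt_ofReal_iff_of_nonneg hδ).2 hδq))
  refine ⟨T, hT, fun θ P hP => le_trans ?_ hTq.le⟩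
  refine le_iSup_of_le θ (le_iSup₂_of_le P hP (measure_mono fun x (hx : t < _) => ?_))
  exact hrt.trans_le (ofReal_le_ofReal hx.le)

end Quantile

section ProductFamily

variable {Θ X : Type*} [MeasurableSpace X] {Q : Θ → Set (Measure X)}

theorem isProbabilityMeasure_of_mem_prodFamily (hQ : ∀ θ, ∀ P ∈ Q θ, IsProbabilityMeasure P)
    {n : ℕ} {θ : Θ} {P : Measure (Fin n → X)} (hP : P ∈ prodFamily Q n θ) :
    IsProbabilityMeasure P := by
  obtain ⟨P, hP, rfl⟩ := hP
  have := hQ θ P hP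
  infer_instance

theorem MeasureTheory.Measure.pi_map_curry_comp {ι κ ι' : Type*}
    [Fintype ι] [Fintype κ] [Fintype ι']
    (e : ι × κ ≃ ι') (P : Measure X) [IsProbabilityMeasure P] :
    (Measure.pi fun _ : ι' => P).map (fun x i j => x (e (i, j))) =
      Measure.pi fun _ : ι => Measure.pi fun _ : κ => P := by
  have hcomp : (fun (x : ι' → X) i j => x (e (i, j))) =
      MeasurableEquiv.curry ι κ X ∘ (MeasurableEquiv.piCongrLeft (fun _ => X) e).symm := by
    ext x i j
    simp [MeasurableEquiv.piCongrLeft, Equiv.piCongrLeft]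
  rw [hcomp, ← Measure.map_map (by fun_prop) (by fun_prop),
    (measurePreserving_piCongrLeft (fun _ => P) e).symm.map_eq]
  simp only [← Measure.infinitePi_eq_pi]
  exact Measure.infinitePi_map_curry fun _ _ => P

theorem map_mem_prodFamily_prodFamily (hQ : ∀ θ, ∀ P ∈ Q θ, IsProbabilityMeasure P)
    {m n N : ℕ} (e : Fin m × Fin n ≃ Fin N) {θ : Θ} {P : Measure (Fin N → X)}
    (hP : P ∈ prodFamily Q N θ) :
    P.map (fun x i j => x (e (i, j))) ∈ prodFamily (prodFamily Q n) m θ := by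
  obtain ⟨P, hP, rfl⟩ := hP
  have := hQ θ P hP
  exact ⟨_, ⟨P, hP, rfl⟩, (Measure.pi_map_curry_comp e P).symm⟩

theorem map_eval_zero_mem_of_mem_prodFamily_one {θ : Θ} {P : Measure (Fin 1 → X)}
    (hP : P ∈ prodFamily Q 1 θ) : P.map (fun x => x 0) ∈ Q θ := by
  obtain ⟨P, hP, rfl⟩ := hP
  convert hP
  exact (measurePreserving_funUnique P (Fin 1)).map_eq

end ProductFamily

theorem exists_measurable_index_mem {Z : Type*} [MeasurableSpace Z] {G : ℕ → Set Z}
    (hG : ∀ n, MeasurableSet (G n)) :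
    ∃ φ : Z → ℕ, Measurable φ ∧ ∀ z n, z ∈ G n → z ∈ G (φ z) := by
  classical
  -- the second disjunct makes the search terminate on points lying in no `G n`
  have hex : ∀ z, ∃ n, z ∈ G n ∨ ∀ m, z ∉ G m := fun z => by
    by_cases h : ∃ n, z ∈ G n
    · exact h.imp fun _ => Or.inl
    · exact ⟨0, Or.inr (not_exists.1 h)⟩
  refine ⟨fun z => Nat.find (hex z), measurable_find hex fun n => ?_, fun z n hn =>
    (Nat.find_spec (hex z)).resolve_right fun h => h n hn⟩
  simp only [ofPred_or, ofPred_forall]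
  exact (hG n).union (.iInter fun m => (hG m).compl)

theorem Fin.three_pairs_meet {i j i' j' : Fin 3} (hij : i ≠ j) (hij' : i' ≠ j') :
    i = i' ∨ i = j' ∨ j = i' ∨ j = j' := by
  revert i j i' j'; decide

section Median

variable {Θ : Type*} [TopologicalSpace Θ] [TopologicalSpace.SeparableSpace Θ] [Nonempty Θ]
  [MeasurableSpace Θ] [OpensMeasurableSpace Θ] {L : Θ → Θ → ℝ} {A t s : ℝ}

theorem exists_measurable_median (hL : ∀ b, Continuous (L · b)) (hsymm : ∀ a b, L a b = L b a)
    (hA : 0 < A) (hquasi : ∀ a b c, L a b ≤ A * (L a c + L b c)) (hs : 2 * A * t < s) :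
    ∃ med : (Fin 3 → Θ) → Θ, Measurable med ∧ ∀ x θ i j, i ≠ j →
      L (x i) θ ≤ t → L (x j) θ ≤ t → L (med x) θ ≤ s := by
  set r := s / A - t
  have htr : t < r := by rw [lt_sub_iff_add_lt, lt_div_iff₀ hA]; linarith
  have hr : A * (r + t) = s := by rw [sub_add_cancel, mul_div_cancel₀ _ hA.ne']
  set u := TopologicalSpace.denseSeq Θ
  set G : ℕ → Set (Fin 3 → Θ) := fun n =>
    {x | ∃ i j, i ≠ j ∧ L (u n) (x i) ≤ r ∧ L (u n) (x j) ≤ r}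
  have hLu : ∀ n, Measurable (L (u n)) := fun n => by
    rw [show L (u n) = (L · (u n)) from funext (hsymm _)]
    exact (hL _).measurable
  have hG : ∀ n, MeasurableSet (G n) := fun n => by
    simp only [G, ofPred_exists, ofPred_and]
    exact .iUnion fun i => .iUnion fun j => (MeasurableSet.const _).inter
      ((measurableSet_le ((hLu n).comp (measurable_pi_apply i)) measurable_const).inter
        (measurableSet_le ((hLu n).comp (measurable_pi_apply j)) measurable_const))
  obtain ⟨φ, hφ, hφG⟩ := exists_measurable_index_mem hG
  refine ⟨fun x => u (φ x), measurable_from_nat.comp hφ, fun x θ i j hij hi hj => ?_⟩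
  obtain ⟨n, hni, hnj⟩ : ∃ n, L (u n) (x i) < r ∧ L (u n) (x j) < r :=
    (TopologicalSpace.denseRange_denseSeq Θ).exists_mem_open
      ((isOpen_lt (hL _) continuous_const).inter (isOpen_lt (hL _) continuous_const))
      ⟨θ, (hsymm _ _).trans_lt (hi.trans_lt htr), (hsymm _ _).trans_lt (hj.trans_lt htr)⟩
  obtain ⟨i', j', hij', hi', hj'⟩ := hφG x n ⟨i, j, hij, hni.le, hnj.le⟩
  obtain ⟨l, hl, hlθ⟩ : ∃ l, L (u (φ x)) (x l) ≤ r ∧ L (x l) θ ≤ t := by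
    rcases Fin.three_pairs_meet hij' hij with rfl | rfl | rfl | rfl
    exacts [⟨_, hi', hi⟩, ⟨_, hi', hj⟩, ⟨_, hj', hi⟩, ⟨_, hj', hj⟩]
  calc L (u (φ x)) θ ≤ A * (L (u (φ x)) (x l) + L θ (x l)) := hquasi _ _ _
    _ ≤ A * (r + t) := by rw [hsymm θ]; gcongr
    _ = s := hr

end Median

theorem pi_fin_three_majority_mem_le {Z : Type*} [MeasurableSpace Z] (P : Measure Z)
    [IsProbabilityMeasure P] {E : Set Z} (hE : MeasurableSet E) :
    (Measure.pi fun _ : Fin 3 => P) {z | ∀ i j, i ≠ j → z i ∈ E ∨ z j ∈ E} ≤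
      ENNReal.ofReal (majorityProb (P E).toReal) := by
  set x := (P E).toReal
  have hx : x ∈ Icc 0 1 :=
    ⟨toReal_nonneg, toReal_le_of_le_ofReal zero_le_one (ofReal_one ▸ prob_le_one)⟩
  have hPE : P E = ENNReal.ofReal x := (ofReal_toReal (measure_ne_top P E)).symm
  have hPEc : P Eᶜ = ENNReal.ofReal (1 - x) := by
    rw [prob_compl_eq_one_sub hE, hPE, ← ofReal_one, ENNReal.ofReal_sub _ hx.1]
  have hcover : {z : Fin 3 → Z | ∀ i j, i ≠ j → z i ∈ E ∨ z j ∈ E} ⊆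
      univ.pi ![univ, E, E] ∪ univ.pi ![E, E, Eᶜ] ∪ univ.pi ![E, Eᶜ, E] := by
    intro z hz
    have h01 := hz 0 1 (by decide)
    have h02 := hz 0 2 (by decide)
    have h12 := hz 1 2 (by decide)
    simp only [mem_union, Set.mem_pi, mem_univ, forall_const, Fin.forall_fin_succ, Fin.isValue,
      Matrix.cons_val_zero, Matrix.cons_val_succ, Fin.succ_zero_eq_one, Matrix.cons_val_fin_one,
      Fin.succ_one_eq_two, IsEmpty.forall_iff, and_true, true_and, mem_compl_iff]
    tauto
  calc (Measure.pi fun _ : Fin 3 => P) {z | ∀ i j, i ≠ j → z i ∈ E ∨ z j ∈ E}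
      ≤ (Measure.pi fun _ : Fin 3 => P)
          (univ.pi ![univ, E, E] ∪ univ.pi ![E, E, Eᶜ] ∪ univ.pi ![E, Eᶜ, E]) :=
        measure_mono hcover
    _ ≤ (Measure.pi fun _ : Fin 3 => P) (univ.pi ![univ, E, E]) +
          (Measure.pi fun _ : Fin 3 => P) (univ.pi ![E, E, Eᶜ]) +
          (Measure.pi fun _ : Fin 3 => P) (univ.pi ![E, Eᶜ, E]) :=
        (measure_union_le _ _).trans (add_le_add_left (measure_union_le _ _) _)
    _ = ENNReal.ofReal (x * x + x * x * (1 - x) + x * (1 - x) * x) := by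
      have h1x : 0 ≤ 1 - x := sub_nonneg.2 hx.2
      simp only [Measure.pi_pi, Fin.prod_univ_three, Fin.isValue, Matrix.cons_val_zero,
        measure_univ, Matrix.cons_val_one, hPE, one_mul, Matrix.cons_val, hPEc]
      rw [ENNReal.ofReal_add (by positivity) (by positivity),
        ENNReal.ofReal_add (by positivity) (by positivity)]
      simp only [ENNReal.ofReal_mul, hx.1, h1x, mul_nonneg]
    _ = ENNReal.ofReal (majorityProb x) := by unfold majorityProb; ring_nf

section Boosting

variable {Θ Z : Type*} [TopologicalSpace Θ] [TopologicalSpace.SeparableSpace Θ] [Nonempty Θ]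
  [MeasurableSpace Θ] [OpensMeasurableSpace Θ] [MeasurableSpace Z]
  {Q : Θ → Set (Measure Z)} {L : Θ → Θ → ℝ} {A t q s : ℝ}

theorem AttainsQuantile.prodFamily_three (hQ : ∀ θ, ∀ P ∈ Q θ, IsProbabilityMeasure P)
    (hL : ∀ b, Continuous (L · b)) (hsymm : ∀ a b, L a b = L b a) (hA : 0 < A)
    (hquasi : ∀ a b c, L a b ≤ A * (L a c + L b c)) (h : AttainsQuantile Q L t q)
    (hq : q ∈ Icc 0 1) (hs : 2 * A * t < s) :
    AttainsQuantile (prodFamily Q 3) L s (majorityProb q) := by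
  obtain ⟨T, hT, hTq⟩ := h
  obtain ⟨med, hmed, hmed_le⟩ := exists_measurable_median hL hsymm hA hquasi hs
  refine ⟨fun z => med fun i => T (z i),
    hmed.comp (measurable_pi_lambda _ fun i => hT.comp (measurable_pi_apply i)), ?_⟩
  rintro θ _ ⟨P, hP, rfl⟩
  have := hQ θ P hP
  set E := {z | t < L (T z) θ}
  have hE : MeasurableSet E := measurableSet_lt measurable_const ((hL θ).measurable.comp hT)
  have hPE : (P E).toReal ≤ q := toReal_le_of_le_ofReal hq.1 (hTq θ P hP)
  have hbad : {z : Fin 3 → Z | s < L (med fun i => T (z i)) θ} ⊆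
      {z | ∀ i j, i ≠ j → z i ∈ E ∨ z j ∈ E} := fun z hz i j hij => by
    by_contra! hout
    exact not_lt.2 (hmed_le (fun i => T (z i)) θ i j hij (not_lt.1 hout.1) (not_lt.1 hout.2)) hz
  calc _ ≤ _ := measure_mono hbad
    _ ≤ ENNReal.ofReal (majorityProb (P E).toReal) := pi_fin_three_majority_mem_le P hE
    _ ≤ ENNReal.ofReal (majorityProb q) :=
      ofReal_le_ofReal (monotoneOn_majorityProb ⟨toReal_nonneg, hPE.trans hq.2⟩ hq hPE)

theorem AttainsQuantile.prodFamily_pow_three (hQ : ∀ θ, ∀ P ∈ Q θ, IsProbabilityMeasure P)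
    (hL : ∀ b, Continuous (L · b)) (hsymm : ∀ a b, L a b = L b a) (hA : 0 < A)
    (hquasi : ∀ a b c, L a b ≤ A * (L a c + L b c)) (h : AttainsQuantile Q L t q)
    (hq : q ∈ Icc 0 1) (k : ℕ) (hs : (2 * A) ^ k * t < s) :
    AttainsQuantile (prodFamily Q (3 ^ k)) L s (majorityProb^[k] q) := by
  induction k generalizing s with
  | zero =>
    refine (h.mono (by simpa using hs.le) le_rfl).of_map (measurable_pi_apply 0)
      fun θ P hP => map_eval_zero_mem_of_mem_prodFamily_one hP
  | succ k ih =>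
    obtain ⟨t', ht', ht's⟩ : ∃ t', (2 * A) ^ k * t < t' ∧ t' < s / (2 * A) :=
      exists_between (by rwa [lt_div_iff₀ (by positivity), mul_right_comm, ← pow_succ])
    rw [Function.iterate_succ_apply']
    exact ((ih ht').prodFamily_three (fun θ P hP => isProbabilityMeasure_of_mem_prodFamily hQ hP)
      hL hsymm hA hquasi (mapsTo_majorityProb.iterate k hq)
      ((lt_div_iff₀' (by positivity)).1 ht's)).of_map (by fun_prop)
      fun θ P hP => map_mem_prodFamily_prodFamily hQ
        (finProdFinEquiv.trans (finCongr (pow_succ' 3 k).symm)) hP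

end Boosting

theorem lowerMinimaxQuantile_boost_general
    {Θ 𝒳 : Type*} [PseudoMetricSpace Θ] [Nonempty Θ] [PolishSpace Θ]
    [MeasurableSpace Θ] [BorelSpace Θ] [MeasurableSpace 𝒳]
    (Pfam : Θ → Set (Measure 𝒳)) (hPfam : ∀ θ, ∀ P ∈ Pfam θ, IsProbabilityMeasure P)
    (g : ℝ → ℝ)
    (hgcont : Continuous g)
    (A : ℝ) (hA : 0 < A)
    (hquasi : ∀ θ₁ θ₂ θ₃ : Θ,
      g (dist θ₁ θ₂) ≤ A * (g (dist θ₁ θ₃) + g (dist θ₂ θ₃)))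
    (δm δp : ℝ) (hδm : δm ∈ Set.Ioo (0 : ℝ) (1/2)) (hδp : δp ∈ Set.Ioo δm (1/2)) :
    (∃ k : ℕ, (fun x : ℝ => x ^ 3 + 3 * x ^ 2 * (1 - x))^[k] δp ≤ δm) ∧
      ∀ k : ℕ, (fun x : ℝ => x ^ 3 + 3 * x ^ 2 * (1 - x))^[k] δp ≤ δm →
        ∀ δ : ℝ, 0 < δ → δ ≤ δp →
          (ENNReal.ofReal ((2 * A) ^ k))⁻¹ *
              lowerMinimaxQuantile (prodFamily Pfam (3 ^ k)) (fun a b => g (dist a b)) δm ≤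
            lowerMinimaxQuantile Pfam (fun a b => g (dist a b)) δ := by
  obtain ⟨hδm0, -⟩ := hδm
  obtain ⟨hδmp, hδp2⟩ := hδp
  refine ⟨((tendsto_iterate_majorityProb (hδm0.trans hδmp).le hδp2).eventually
    (ge_mem_nhds hδm0)).exists, fun k hk δ hδ hδδp => ?_⟩
  have hLcont : ∀ b : Θ, Continuous fun a => g (dist a b) := fun b => by fun_prop
  have hc : 0 < (2 * A) ^ k := by positivity
  refine ENNReal.le_of_forall_lt_ofReal fun t ht => ?_
  rw [ENNReal.inv_mul_le_iff (ofReal_pos.2 hc).ne' ofReal_ne_top, ← ENNReal.ofReal_mul hc.le]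
  refine lowerMinimaxQuantile_le_ofReal hδm0.le fun s hs q hq => ?_
  have hδk : majorityProb^[k] δ < q :=
    ((monotoneOn_majorityProb.iterate_of_mapsTo mapsTo_majorityProb k)
      ⟨hδ.le, by linarith⟩ ⟨(hδ.trans_le hδδp).le, by linarith⟩ hδδp).trans_lt (hk.trans_lt hq)
  obtain ⟨δ', ⟨hδδ', hδ'1⟩, hδ'q⟩ : ∃ δ' ∈ Ioc δ 1, majorityProb^[k] δ' < q :=
    (Eventually.and (Ioc_mem_nhdsGT (show δ < 1 by linarith)) (nhdsWithin_le_nhds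
      (((continuous_majorityProb.iterate k).tendsto δ).eventually (gt_mem_nhds hδk)))).exists
  exact ((AttainsQuantile.of_lowerMinimaxQuantile_lt hδ.le hδδ' ht).prodFamily_pow_three hPfam
    hLcont (fun a b => by rw [dist_comm]) hA hquasi ⟨(hδ.trans hδδ').le, hδ'1⟩ k hs).mono
    le_rfl hδ'q.le

/-- boosting of the quantile level. -/
theorem lowerMinimaxQuantile_boost
    {Θ 𝒳 : Type*} [PseudoMetricSpace Θ] [Nonempty Θ] [PolishSpace Θ]
    [MeasurableSpace Θ] [BorelSpace Θ] [MeasurableSpace 𝒳]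
    (Pfam : Θ → Set (Measure 𝒳)) (hPfam : ∀ θ, ∀ P ∈ Pfam θ, IsProbabilityMeasure P)
    (g : ℝ → ℝ) (hg : MonotoneOn g (Set.Ici 0)) (hg0 : ∀ x ∈ Set.Ici (0 : ℝ), 0 ≤ g x)
    (hgcont : Continuous g)
    (A : ℝ) (hA : 0 < A)
    (hquasi : ∀ θ₁ θ₂ θ₃ : Θ,
      g (dist θ₁ θ₂) ≤ A * (g (dist θ₁ θ₃) + g (dist θ₂ θ₃)))
    (δm δp : ℝ) (hδm : δm ∈ Set.Ioo (0 : ℝ) (1/2)) (hδp : δp ∈ Set.Ioo δm (1/2)) :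
    (∃ k : ℕ, (fun x : ℝ => x ^ 3 + 3 * x ^ 2 * (1 - x))^[k] δp ≤ δm) ∧
      ∀ k : ℕ, (fun x : ℝ => x ^ 3 + 3 * x ^ 2 * (1 - x))^[k] δp ≤ δm →
        ∀ δ : ℝ, 0 < δ → δ ≤ δp →
          (ENNReal.ofReal ((2 * A) ^ k))⁻¹ *
              lowerMinimaxQuantile (prodFamily Pfam (3 ^ k)) (fun a b => g (dist a b)) δm ≤
            lowerMinimaxQuantile Pfam (fun a b => g (dist a b)) δ :=
  lowerMinimaxQuantile_boost_general Pfam hPfam g hgcont A hA hquasi δm δp hδm hδp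
end

section
/- Packing of sparse unit vectors: fix d ∈ ℕ and s ∈ {1,…,d}, and let V := {v ∈ ℝ^d : ‖v‖₂ = 1 and ‖v‖₀ ≤ s}. There exist an integer M with log M ≥ (3s/4)·log(d/(4s)) and vectors v₁,…,v_M ∈ V such that ‖v_j − v_k‖₂ > 1/2 for all distinct j,k ∈ {1,…,M}. -/
/-!
Take `m = ⌊d / s⌋` and view `Fin s × Fin m` as `s` disjoint blocks of `m` coordinates of `ℝ^d`.
A word `w : Fin s → Fin m` gives the unit vector with entry `1 / √s` at position `w b` of each
block `b`, and two such vectors are at squared distance `2 · hammingDist w w' / s`. A maximal code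
of minimum Hamming distance `> s / 8` covers all `m ^ s` words by Hamming balls of size at most
`2 ^ s · m ^ (s / 8)` (Gilbert–Varshamov), so it has at least `m ^ (7 s / 8) / 2 ^ s` words.
When `d > 4 s` we have `m ≥ 4` and `d / (4 s) < 5 m / 16`, and `2 · (5 / 16) ^ (3 / 4) < 1`
gives the bound; when `d ≤ 4 s` the bound is trivial.
-/

open Finset Fintype Function

section GilbertVarshamov

variable {ι α : Type*} [Fintype ι] [DecidableEq ι] [Fintype α] [DecidableEq α]

theorem card_differ_exactly_on_le (c : ι → α) (D : Finset ι) :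
    #{x : ι → α | ∀ i, x i ≠ c i ↔ i ∈ D} ≤ card α ^ #D := by
  have hsub : ({x : ι → α | ∀ i, x i ≠ c i ↔ i ∈ D} : Finset _) ⊆
      univ.image fun (y : D → α) i => if h : i ∈ D then y ⟨i, h⟩ else c i := by
    intro x hx
    rw [mem_filter] at hx
    refine mem_image.2 ⟨fun i => x i, mem_univ _, funext fun i => ?_⟩
    split_ifs with hi
    · rfl
    · by_contra h
      exact hi ((hx.2 i).1 (Ne.symm h))
  calc _ ≤ #(univ.image fun (y : D → α) i => if h : i ∈ D then y ⟨i, h⟩ else c i) :=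
        card_le_card hsub
    _ ≤ card (D → α) := card_image_le
    _ = card α ^ #D := by simp

theorem card_hammingBall_le [Nonempty α] (c : ι → α) (r : ℕ) :
    #{x : ι → α | hammingDist x c ≤ r} ≤ 2 ^ card ι * card α ^ r := by
  set P := (univ : Finset ι).powerset.filter (#· ≤ r)
  have hsub : ({x : ι → α | hammingDist x c ≤ r} : Finset _) ⊆
      P.biUnion fun D => {x : ι → α | ∀ i, x i ≠ c i ↔ i ∈ D} := by
    intro x hx
    rw [mem_filter] at hx
    exact mem_biUnion.2 ⟨_, mem_filter.2 ⟨mem_powerset.2 (subset_univ _), hx.2⟩,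
      mem_filter.2 ⟨mem_univ _, fun i => by simp⟩⟩
  calc _ ≤ _ := card_le_card hsub
    _ ≤ ∑ D ∈ P, #{x : ι → α | ∀ i, x i ≠ c i ↔ i ∈ D} := card_biUnion_le
    _ ≤ ∑ _D ∈ P, card α ^ r := sum_le_sum fun D hD =>
        (card_differ_exactly_on_le c D).trans
          (Nat.pow_le_pow_right card_pos (mem_filter.1 hD).2)
    _ = #P * card α ^ r := by rw [sum_const, smul_eq_mul]
    _ ≤ 2 ^ card ι * card α ^ r := by
        gcongr
        exact (card_filter_le _ _).trans (by simp)

/-- Gilbert–Varshamov: a maximal code of minimum distance `r + 1` is an `r`-covering. -/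
theorem exists_hammingDist_separated [Nonempty α] (r : ℕ) :
    ∃ F : Finset (ι → α), (F : Set (ι → α)).Pairwise (fun x y => r < hammingDist x y) ∧
      card α ^ card ι ≤ #F * (2 ^ card ι * card α ^ r) := by
  obtain ⟨F, hF, hmax⟩ := exists_max_image
    (univ.filter fun F : Finset (ι → α) =>
      (F : Set (ι → α)).Pairwise (fun x y => r < hammingDist x y)) card
    ⟨∅, by simp⟩
  have hsep := (mem_filter.1 hF).2
  refine ⟨F, hsep, ?_⟩
  have hcover : ∀ x : ι → α, ∃ c ∈ F, hammingDist x c ≤ r := by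
    intro x
    by_contra! hfar
    have hx : x ∉ F := fun hx => by simpa using hfar x hx
    have := hmax (insert x F) <| mem_filter.2 ⟨mem_univ _, by
      rw [coe_insert, Set.pairwise_insert]
      exact ⟨hsep, fun c hc _ => ⟨hfar c hc, hammingDist_comm x c ▸ hfar c hc⟩⟩⟩
    rw [card_insert_of_notMem hx] at this
    omega
  calc card α ^ card ι = #(univ : Finset (ι → α)) := by simp
    _ ≤ #(F.biUnion fun c => {x : ι → α | hammingDist x c ≤ r}) := card_le_card fun x _ =>
        let ⟨c, hc, hxc⟩ := hcover x
        mem_biUnion.2 ⟨c, hc, mem_filter.2 ⟨mem_univ _, hxc⟩⟩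
    _ ≤ ∑ c ∈ F, #{x : ι → α | hammingDist x c ≤ r} := card_biUnion_le
    _ ≤ ∑ _c ∈ F, 2 ^ card ι * card α ^ r := sum_le_sum fun c _ => card_hammingBall_le c r
    _ = #F * (2 ^ card ι * card α ^ r) := by rw [sum_const, smul_eq_mul]

end GilbertVarshamov

theorem Fintype.sum_comp_extend_zero {ι κ β M : Type*} [Fintype ι] [Fintype κ] [Zero β]
    [AddCommMonoid M] {e : ι → κ} (he : Injective e) (f : ι → β) (g : β → M) (hg : g 0 = 0) :
    ∑ k, g (extend e f 0 k) = ∑ i, g (f i) :=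
  (sum_of_injective e he _ _ (fun k hk => by rw [extend_apply' _ _ _ hk, Pi.zero_apply, hg])
    fun i => by rw [he.extend_apply]).symm

theorem hammingNorm_extend_zero {ι κ β : Type*} [Fintype ι] [Fintype κ] [Zero β] [DecidableEq β]
    {e : ι → κ} (he : Injective e) (f : ι → β) :
    hammingNorm (extend e f 0) = hammingNorm f := by
  simp only [hammingNorm, card_filter]
  exact sum_comp_extend_zero he f (fun b => if b ≠ 0 then 1 else 0) (by simp)

namespace SparseCode

variable {ι α : Type*} [Fintype ι] [Fintype α] [DecidableEq α]

def graphIndicator (w : ι → α) (p : ι × α) : ℝ := if w p.1 = p.2 then 1 else 0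

theorem card_graph (w : ι → α) : #{p : ι × α | w p.1 = p.2} = card ι := by
  rw [card_filter, Fintype.sum_prod_type]
  simp

theorem sum_graphIndicator_sq (w : ι → α) : ∑ p, graphIndicator w p ^ 2 = card ι := by
  simp [graphIndicator, card_graph]

theorem sum_graphIndicator_sub_sq (w w' : ι → α) :
    ∑ p, (graphIndicator w p - graphIndicator w' p) ^ 2 = 2 * hammingDist w w' := by
  have hblock : ∀ b, ∑ a, (graphIndicator w (b, a) - graphIndicator w' (b, a)) ^ 2 =
      if w b ≠ w' b then 2 else 0 := by
    intro b
    by_cases h : w b = w' b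
    · simp [graphIndicator, h]
    · simp [graphIndicator, h, sub_sq, Finset.sum_add_distrib, one_add_one_eq_two]
  simp [Fintype.sum_prod_type, hblock, hammingDist, card_filter, mul_sum]

theorem hammingNorm_graphIndicator (w : ι → α) : hammingNorm (graphIndicator w) = card ι := by
  simp [hammingNorm, graphIndicator, card_graph]

variable {κ : Type*} [Fintype κ] {e : ι × α → κ}

noncomputable def sparseUnitVector (e : ι × α → κ) (w : ι → α) : κ → ℝ :=
  extend e ((√(card ι))⁻¹ • graphIndicator w) 0

theorem sum_sparseUnitVector_sq [Nonempty ι] (he : Injective e) (w : ι → α) :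
    ∑ k, sparseUnitVector e w k ^ 2 = 1 := by
  rw [sparseUnitVector, sum_comp_extend_zero he _ (· ^ 2) (zero_pow two_ne_zero)]
  simp only [Pi.smul_apply, smul_eq_mul, mul_pow, ← mul_sum, sum_graphIndicator_sq, inv_pow,
    Real.sq_sqrt (Nat.cast_nonneg _)]
  exact inv_mul_cancel₀ (Nat.cast_ne_zero.2 card_ne_zero)

theorem sum_sparseUnitVector_sub_sq (he : Injective e) (w w' : ι → α) :
    ∑ k, (sparseUnitVector e w k - sparseUnitVector e w' k) ^ 2 =
      2 * hammingDist w w' / card ι := by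
  simp_rw [← Pi.sub_apply (sparseUnitVector e w), sparseUnitVector, ← extend_sub, sub_zero]
  rw [sum_comp_extend_zero he _ (· ^ 2) (zero_pow two_ne_zero)]
  simp only [Pi.sub_apply, Pi.smul_apply, smul_eq_mul, ← mul_sub, mul_pow, ← mul_sum,
    sum_graphIndicator_sub_sq, inv_pow, Real.sq_sqrt (Nat.cast_nonneg _)]
  ring

theorem hammingNorm_sparseUnitVector_le (he : Injective e) (w : ι → α) :
    hammingNorm (sparseUnitVector e w) ≤ card ι := by
  rw [sparseUnitVector, hammingNorm_extend_zero he, ← hammingNorm_graphIndicator w]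
  exact hammingNorm_smul_le_hammingNorm

end SparseCode

theorem log_bound_of_pow_le_mul {d s m r M : ℕ} (hdm : d < s * (m + 1)) (hr : 8 * r ≤ s)
    (hM : m ^ s ≤ M * (2 ^ s * m ^ r)) :
    3 * (s : ℝ) / 4 * Real.log (d / (4 * s)) ≤ Real.log M := by
  rcases le_or_gt d (4 * s) with hsmall | hlarge
  · refine (mul_nonpos_of_nonneg_of_nonpos (by positivity) (Real.log_nonpos (by positivity)
      (div_le_one_of_le₀ (by exact_mod_cast hsmall) (by positivity)))).trans
      (Real.log_natCast_nonneg M)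
  have hm : 4 ≤ m := by
    by_contra! h
    have : s * (m + 1) ≤ s * 4 := Nat.mul_le_mul_left _ (by omega)
    omega
  have hM0 : M ≠ 0 := by
    rintro rfl
    simp at hM
    omega
  have hs : (0 : ℝ) < s := by
    exact_mod_cast Nat.pos_of_ne_zero fun h => by simp [h] at hdm
  have hd : (0 : ℝ) < d := by exact_mod_cast (by omega : 0 < d)
  have hmR : (4 : ℝ) ≤ m := by exact_mod_cast hm
  have hlogM : s * Real.log m ≤ Real.log M + s * Real.log 2 + r * Real.log m := by
    have hMR : (m : ℝ) ^ s ≤ M * (2 ^ s * m ^ r) := by exact_mod_cast hM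
    have := Real.log_le_log (by positivity) hMR
    rw [Real.log_mul (by positivity) (by positivity), Real.log_mul (by positivity) (by positivity),
      Real.log_pow, Real.log_pow, Real.log_pow] at this
    linarith
  have hlogd : Real.log (d / (4 * s)) ≤ Real.log (5 / 16) + Real.log m := by
    rw [← Real.log_mul (by norm_num) (by positivity)]
    refine Real.log_le_log (by positivity) ?_
    rw [div_le_iff₀ (by positivity)]
    have : (d : ℝ) < s * (m + 1) := by exact_mod_cast hdm
    nlinarith
  have hconst : Real.log 2 + 3 / 4 * Real.log (5 / 16) ≤ 0 := by
    have := Real.log_nonpos (by norm_num) (by norm_num : (2 : ℝ) ^ 4 * (5 / 16) ^ 3 ≤ 1)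
    rw [Real.log_mul (by norm_num) (by norm_num), Real.log_pow, Real.log_pow] at this
    push_cast at this
    linarith
  have hr' : (8 : ℝ) * r ≤ s := by exact_mod_cast hr
  have hlogm : 0 ≤ Real.log m := Real.log_nonneg (by linarith)
  nlinarith [mul_le_mul_of_nonneg_left hlogd hs.le, mul_le_mul_of_nonneg_left hconst hs.le,
    mul_le_mul_of_nonneg_right hr' hlogm]

theorem sparse_unit_vector_packing_general (d s : ℕ) (hs1 : 1 ≤ s) (hsd : s ≤ d) :
    ∃ (M : ℕ) (v : Fin M → Fin d → ℝ),
      (3 * (s : ℝ) / 4) * Real.log ((d : ℝ) / (4 * s)) ≤ Real.log M ∧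
      (∀ j : Fin M, (∑ i, v j i ^ 2) = 1 ∧
        (Finset.univ.filter fun i => v j i ≠ 0).card ≤ s) ∧
      ∀ j k : Fin M, j ≠ k → 1/2 < Real.sqrt (∑ i, (v j i - v k i) ^ 2) := by
  have : Nonempty (Fin s) := ⟨⟨0, hs1⟩⟩
  have : Nonempty (Fin (d / s)) := ⟨⟨0, Nat.div_pos hsd hs1⟩⟩
  obtain ⟨F, hsep, hcard⟩ := exists_hammingDist_separated (ι := Fin s) (α := Fin (d / s)) (s / 8)
  let e : Fin s × Fin (d / s) → Fin d := Fin.castLE (Nat.mul_div_le d s) ∘ finProdFinEquiv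
  have he : Injective e := (Fin.castLE_injective _).comp finProdFinEquiv.injective
  let w (j : Fin #F) : Fin s → Fin (d / s) := F.equivFin.symm j
  refine ⟨#F, fun j => SparseCode.sparseUnitVector e (w j), ?_, fun j => ⟨?_, ?_⟩,
    fun j k hjk => ?_⟩
  · exact log_bound_of_pow_le_mul (Nat.lt_mul_div_succ d hs1) (Nat.mul_div_le s 8)
      (by simpa using hcard)
  · exact SparseCode.sum_sparseUnitVector_sq he (w j)
  · exact (SparseCode.hammingNorm_sparseUnitVector_le he (w j)).trans_eq (Fintype.card_fin s)
  · have hdist : s / 8 < hammingDist (w j) (w k) :=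
      hsep (F.equivFin.symm j).2 (F.equivFin.symm k).2
        fun h => hjk (F.equivFin.symm.injective (Subtype.ext h))
    have : (s : ℝ) < 8 * hammingDist (w j) (w k) := by exact_mod_cast (by omega)
    rw [SparseCode.sum_sparseUnitVector_sub_sq he, Fintype.card_fin, Real.lt_sqrt (by norm_num),
      lt_div_iff₀ (by positivity)]
    linarith

/-- packing of sparse unit vectors. -/
theorem sparse_unit_vector_packing (d s : ℕ) (hd : 0 < d) (hs1 : 1 ≤ s) (hsd : s ≤ d) :
    ∃ (M : ℕ) (v : Fin M → Fin d → ℝ),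
      (3 * (s : ℝ) / 4) * Real.log ((d : ℝ) / (4 * s)) ≤ Real.log M ∧
      (∀ j : Fin M, (∑ i, v j i ^ 2) = 1 ∧
        (Finset.univ.filter fun i => v j i ≠ 0).card ≤ s) ∧
      ∀ j k : Fin M, j ≠ k → 1/2 < Real.sqrt (∑ i, (v j i - v k i) ^ 2) :=
  sparse_unit_vector_packing_general d s hs1 hsd
end
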